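/- Let A, C, T be nonempty compact convex subsets of ℝⁿ and let s, t ≥ 0. For a nonempty compact convex set X and r ≥ 0 define Δ(r,X) := conv((X×{r}) ∪ ((X+rT)×{0})) ⊆ ℝⁿ⁺¹. Then Δ(s,A) + Δ(t,C) = Δ(s+t, A+C), where + on the left is Minkowski sum in ℝⁿ⁺¹. -/

import Mathlib

/-!
The convex hull of a Minkowski sum is the sum of the convex hulls, so it suffices to compare
generating sets. Since `(s + t) • T = s • T + t • T` for convex `T`, the sum of the generators of
`Δ(s, A)` and `Δ(t, C)` consists of the generators of `Δ(s + t, A + C)` together with two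
intermediate layers `(A + C + t • T) × {s}` and `(A + C + s • T) × {t}`. Every point of an
intermediate layer lies on the segment joining a top generator `(x, s + t)` to a bottom generator
`(x + (s + t) • τ, 0)`, so these layers do not enlarge the convex hull.
-/

open Pointwise Set

lemma prod_singleton_add_prod_singleton {α β : Type*} [Add α] [Add β] (X Y : Set α) (a b : β) :
    X ×ˢ {a} + Y ×ˢ {b} = (X + Y) ×ˢ ({a + b} : Set β) := by
  rw [prod_add_prod_comm, singleton_add_singleton]

lemma convexHull_union_eq_left_of_subset {𝕜 E : Type*} [Semiring 𝕜] [PartialOrder 𝕜]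
    [AddCommMonoid E] [Module 𝕜 E] {s t : Set E} (h : t ⊆ convexHull 𝕜 s) :
    convexHull 𝕜 (s ∪ t) = convexHull 𝕜 s :=
  (convexHull_min (union_subset (subset_convexHull 𝕜 s) h) (convex_convexHull 𝕜 s)).antisymm
    (convexHull_mono subset_union_left)

variable {𝕜 E : Type*} [Field 𝕜] [LinearOrder 𝕜] [IsStrictOrderedRing 𝕜]
  [AddCommGroup E] [Module 𝕜 E]

-- `convexHull 𝕜 (pushPullGenerators T r X)` is the polytope `Δ(r, X)`.
def pushPullGenerators (T : Set E) (r : 𝕜) (X : Set E) : Set (E × 𝕜) :=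
  X ×ˢ {r} ∪ (X + r • T) ×ˢ {0}

lemma pushPullGenerators_add {T : Set E} (hT : Convex 𝕜 T) {s t : 𝕜} (hs : 0 ≤ s) (ht : 0 ≤ t)
    (A C : Set E) :
    pushPullGenerators T s A + pushPullGenerators T t C =
      pushPullGenerators T (s + t) (A + C) ∪
        ((A + C + t • T) ×ˢ {s} ∪ (A + C + s • T) ×ˢ {t}) := by
  simp only [pushPullGenerators, union_add, add_union, prod_singleton_add_prod_singleton,
    add_zero, zero_add, hT.add_smul hs ht]
  ac_rfl

lemma prod_singleton_subset_convexHull_pushPullGenerators {s t : 𝕜} (hs : 0 ≤ s) (ht : 0 ≤ t)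
    (T X : Set E) :
    (X + t • T) ×ˢ {s} ⊆ convexHull 𝕜 (pushPullGenerators T (s + t) X) := by
  rintro ⟨_, r⟩ ⟨⟨x, hx, _, ⟨τ, hτ, rfl⟩, rfl⟩, hr : r = s⟩
  subst r
  have htop : (x, s + t) ∈ pushPullGenerators T (s + t) X := Or.inl ⟨hx, rfl⟩
  rcases (add_nonneg hs ht).eq_or_lt with hst | hst
  · obtain ⟨rfl, rfl⟩ := (add_eq_zero_iff_of_nonneg hs ht).1 hst.symm
    simpa using subset_convexHull 𝕜 _ htop
  have hbot : (x + (s + t) • τ, 0) ∈ pushPullGenerators T (s + t) X :=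
    Or.inr ⟨add_mem_add hx (smul_mem_smul_set hτ), rfl⟩
  -- `(x + t • τ, s)` divides the segment from `(x, s + t)` to `(x + (s + t) • τ, 0)` in ratio `t : s`.
  convert (convex_convexHull 𝕜 _) (subset_convexHull 𝕜 _ htop) (subset_convexHull 𝕜 _ hbot)
    (div_nonneg hs hst.le) (div_nonneg ht hst.le) (by field_simp) using 1
  ext
  · simp only [Prod.fst_add, Prod.smul_fst]
    match_scalars <;> field_simp
  · simp only [Prod.snd_add, Prod.smul_snd, smul_eq_mul]
    field_simp
    ring

theorem pushPull_add (n : ℕ) (A C T : Set (Fin n → ℝ))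
    (hTv : Convex ℝ T)
    (s t : ℝ) (hs : 0 ≤ s) (ht : 0 ≤ t) :
    convexHull ℝ ((A ×ˢ ({s} : Set ℝ)) ∪ ((A + s • T) ×ˢ ({0} : Set ℝ))) +
        convexHull ℝ ((C ×ˢ ({t} : Set ℝ)) ∪ ((C + t • T) ×ˢ ({0} : Set ℝ))) =
      convexHull ℝ (((A + C) ×ˢ ({s + t} : Set ℝ)) ∪
        (((A + C) + (s + t) • T) ×ˢ ({0} : Set ℝ))) := by
  change convexHull ℝ (pushPullGenerators T s A) + convexHull ℝ (pushPullGenerators T t C) =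
    convexHull ℝ (pushPullGenerators T (s + t) (A + C))
  rw [← convexHull_add, pushPullGenerators_add hTv hs ht, convexHull_union_eq_left_of_subset]
  refine union_subset (prod_singleton_subset_convexHull_pushPullGenerators hs ht T _) ?_
  rw [add_comm s t]
  exact prod_singleton_subset_convexHull_pushPullGenerators ht hs T _
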